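/- If (𝓕_ℓ)_{ℓ∈ω} is a countable family of non-meager filters on ω (each containing all cofinite sets), then the intersection ⋂_{ℓ∈ω} 𝓕_ℓ is a non-meager filter on ω. -/

import Mathlib

def IsFilterOn {I : Type*} (F : Set (Set I)) : Prop :=
  (∀ s ∈ F, s.Nonempty) ∧ (∀ s ∈ F, ∀ t ∈ F, s ∩ t ∈ F) ∧
    (∀ s ∈ F, ∀ t : Set I, s ⊆ t → t ∈ F) ∧ (∀ s : Set I, sᶜ.Finite → s ∈ F)

noncomputable def chi {I : Type*} (s : Set I) : I → Bool :=
  fun i => @decide (i ∈ s) (Classical.propDecidable _)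

/-!
Talagrand's characterisation: if an upward closed family `F` is meagre, there is an interval
partition `I k = [a k, a (k + 1))` such that every member of `F` meets all but finitely many
`I k`. Indeed, write `F ⊆ (⋂ k, U k)ᶜ` with `U k` dense open and decreasing, and choose
`a (k + 1)` so that some pattern on `I k` forces membership in `U k`; filling infinitely many
intervals missed by `A ∈ F` with their patterns gives a superset of `A` in every `U k`.
Conversely, a non-meagre family has members missing infinitely many of any finite sets `I k`
that drift off to infinity.

If `⋂ ℓ, F ℓ` were meagre, take such a partition. Using the non-meagreness of `F 0`, `F 1`, …
in turn, obtain decreasing infinite sets of indices `K ℓ` and `A ℓ ∈ F ℓ` missing `I k` for all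
`k ∈ K ℓ`, and pick `n ℓ ∈ K ℓ` strictly increasing. Then `B = (⋃ i, I (n i))ᶜ` contains `A ℓ`
up to a finite set, hence lies in every `F ℓ`, yet misses infinitely many intervals.
-/

open Set Filter PiNat

lemma chi_apply_eq_true {I : Type*} {s : Set I} {i : I} : chi s i = true ↔ i ∈ s :=
  @decide_eq_true_iff _ (Classical.propDecidable _)

namespace IsFilterOn

variable {I : Type*}

lemma mem_of_diff_subset {F : Set (Set I)} (hF : IsFilterOn F) {s t u : Set I} (hs : s ∈ F)
    (ht : t.Finite) (h : s \ t ⊆ u) : u ∈ F :=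
  hF.2.2.1 _ (hF.2.1 s hs tᶜ (hF.2.2.2 _ (by rwa [compl_compl]))) u h

lemma iInter {ι : Type*} [Nonempty ι] {F : ι → Set (Set I)} (hF : ∀ i, IsFilterOn (F i)) :
    IsFilterOn (⋂ i, F i) := by
  simp only [IsFilterOn, mem_iInter]
  exact ⟨fun s hs => (hF (Classical.arbitrary ι)).1 s (hs _),
    fun s hs t ht i => (hF i).2.1 s (hs i) t (ht i),
    fun s hs t hst i => (hF i).2.2.1 s (hs i) t hst, fun s hs i => (hF i).2.2.2 s hs⟩

end IsFilterOn

section Cylinder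

variable {E : ℕ → Type*} [∀ n, TopologicalSpace (E n)] [∀ n, DiscreteTopology (E n)]

lemma IsOpen.exists_cylinder_subset {U : Set (∀ n, E n)} (hU : IsOpen U) {x : ∀ n, E n}
    (hx : x ∈ U) : ∃ m, cylinder x m ⊆ U := by
  obtain ⟨_, ⟨y, m, rfl⟩, hxy, hsub⟩ :=
    (isTopologicalBasis_cylinders E).exists_subset_of_mem_open hx hU
  exact ⟨m, (mem_cylinder_iff_eq.1 hxy).symm ▸ hsub⟩

lemma Dense.exists_cylinder_subset_cylinder {U : Set (∀ n, E n)} (hU : IsOpen U) (hd : Dense U)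
    (x : ∀ n, E n) (n : ℕ) : ∃ y ∈ cylinder x n, ∃ m, n ≤ m ∧ cylinder y m ⊆ U := by
  obtain ⟨y, hyU, hyx⟩ := hd.exists_mem_open (isOpen_cylinder E x n) ⟨x, self_mem_cylinder x n⟩
  obtain ⟨m, hm⟩ := hU.exists_cylinder_subset hyU
  exact ⟨y, hyx, max n m, le_max_left _ _, (cylinder_anti y (le_max_right _ _)).trans hm⟩

end Cylinder

lemma Dense.exists_cylinder_inter_pi_Ico_subset {U : Set (ℕ → Bool)} (hU : IsOpen U)
    (hd : Dense U) (n : ℕ) (S : Finset (ℕ → Bool)) :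
    ∃ m, n < m ∧ ∃ t : ℕ → Bool, ∀ s ∈ S, cylinder s n ∩ (Ico n m).pi (fun i => {t i}) ⊆ U := by
  classical
  induction S using Finset.induction_on with
  | empty => exact ⟨n + 1, n.lt_succ_self, fun _ => false, by simp⟩
  | insert s S _ ih =>
    obtain ⟨m, hnm, t, ht⟩ := ih
    obtain ⟨y, hy, m', hmm', hyU⟩ :=
      hd.exists_cylinder_subset_cylinder hU (fun i => if i < n then s i else t i) m
    simp only [mem_cylinder_iff] at hy
    refine ⟨m', hnm.trans_le hmm', y, (Finset.forall_mem_insert _ _ _).2 ⟨?_, fun s' hs' => ?_⟩⟩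
    · rintro w ⟨hws, hwy⟩
      refine hyU (mem_cylinder_iff.2 fun i hi => ?_)
      by_cases hin : i < n
      · rw [mem_cylinder_iff.1 hws i hin, hy i (hin.trans hnm), if_pos hin]
      · exact hwy i ⟨not_lt.1 hin, hi⟩
    · rintro w ⟨hws, hwy⟩
      refine ht s' hs' ⟨hws, fun i hi => ?_⟩
      rw [mem_singleton_iff, hwy i ⟨hi.1, hi.2.trans_le hmm'⟩, hy i hi.2, if_neg (not_lt.2 hi.1)]

lemma Dense.exists_pi_Ico_subset {U : Set (ℕ → Bool)} (hU : IsOpen U) (hd : Dense U) (n : ℕ) :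
    ∃ m, n < m ∧ ∃ t : ℕ → Bool, (Ico n m).pi (fun i => {t i}) ⊆ U := by
  classical
  obtain ⟨m, hnm, t, ht⟩ := hd.exists_cylinder_inter_pi_Ico_subset hU n
    (Finset.univ.image fun (s : Fin n → Bool) i => if h : i < n then s ⟨i, h⟩ else false)
  refine ⟨m, hnm, t, fun w hw => ht _ (Finset.mem_image.2 ⟨fun i => w i, Finset.mem_univ _, rfl⟩)
    ⟨mem_cylinder_iff.2 fun i hi => by simp [hi], hw⟩⟩

lemma IsMeagre.exists_antitone_isOpen_dense {X : Type*} [TopologicalSpace X] {s : Set X}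
    (hs : IsMeagre s) : ∃ U : ℕ → Set X, Antitone U ∧ (∀ n, IsOpen (U n)) ∧ (∀ n, Dense (U n)) ∧
      Disjoint s (⋂ n, U n) := by
  obtain ⟨S, hSo, hSd, hSc, hS⟩ := mem_residual_iff.1 hs
  obtain ⟨V, hV⟩ := (hSc.insert univ).exists_eq_range (insert_nonempty _ _)
  have hVod : ∀ i, IsOpen (V i) ∧ Dense (V i) := fun i => by
    rcases (hV ▸ mem_range_self i : V i ∈ insert univ S) with h | h
    · exact h ▸ ⟨isOpen_univ, dense_univ⟩
    · exact ⟨hSo _ h, hSd _ h⟩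
  refine ⟨fun n => ⋂₀ (V '' Iic n),
    fun _ _ h => sInter_subset_sInter (image_mono (Iic_subset_Iic.2 h)),
    fun n => ((finite_Iic n).image V).isOpen_sInter (forall_mem_image.2 fun i _ => (hVod i).1),
    fun n => ((finite_Iic n).image V).dense_sInter (forall_mem_image.2 fun i _ => (hVod i).1)
      (forall_mem_image.2 fun i _ => (hVod i).2), ?_⟩
  refine subset_compl_iff_disjoint_left.1 (subset_trans ?_ hS)
  rintro x hx _ ht
  obtain ⟨i, rfl⟩ : _ ∈ range V := hV ▸ mem_insert_of_mem _ ht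
  exact mem_iInter.1 hx i _ ⟨i, self_mem_Iic, rfl⟩

theorem exists_strictMono_finite_disjoint_Ico_of_isMeagre {F : Set (Set ℕ)}
    (hup : ∀ s ∈ F, ∀ t, s ⊆ t → t ∈ F) (hF : IsMeagre (chi '' F)) :
    ∃ a : ℕ → ℕ, StrictMono a ∧ ∀ A ∈ F, {k | Disjoint A (Ico (a k) (a (k + 1)))}.Finite := by
  obtain ⟨U, hUanti, hUo, hUd, hdisj⟩ := hF.exists_antitone_isOpen_dense
  choose m hnm t ht using fun k n => (hUd k).exists_pi_Ico_subset (hUo k) n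
  let a : ℕ → ℕ := fun k => Nat.rec 0 (fun k ak => m k ak) k
  have ha : StrictMono a := strictMono_nat_of_lt_succ fun k => hnm k (a k)
  refine ⟨a, ha, fun A hA => not_infinite.1 fun hK => ?_⟩
  set K := {k | Disjoint A (Ico (a k) (a (k + 1)))}
  let B := A ∪ ⋃ k ∈ K, {j ∈ Ico (a k) (a (k + 1)) | t k (a k) j = true}
  have hB : ∀ k ∈ K, chi B ∈ U k := fun k hk => ht k (a k) fun j hj => by
    rw [mem_singleton_iff, Bool.eq_iff_iff, chi_apply_eq_true]
    refine ⟨?_, fun htj => Or.inr (mem_biUnion hk ⟨hj, htj⟩)⟩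
    rintro (hjA | hjB)
    · exact absurd hj (disjoint_left.1 hk hjA)
    · obtain ⟨k', -, hjk', htj⟩ := mem_iUnion₂.1 hjB
      obtain rfl : k' = k := by_contra fun hne =>
        disjoint_left.1 (ha.monotone.pairwise_disjoint_on_Ico_succ hne) hjk' hj
      exact htj
  have : chi B ∈ ⋂ n, U n := mem_iInter.2 fun n => by
    obtain ⟨k, hk, hnk⟩ := hK.exists_gt n
    exact hUanti hnk.le (hB k hk)
  exact hdisj.ne_of_mem ⟨B, hup A hA B subset_union_left, rfl⟩ this rfl

theorem exists_mem_infinite_disjoint_of_not_isMeagre {S : Set (Set ℕ)}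
    (hS : ¬ IsMeagre (chi '' S)) {I : ℕ → Set ℕ} (hfin : ∀ k, (I k).Finite)
    (hI : ∀ n, ∀ᶠ k in atTop, I k ⊆ Ici n) {K : Set ℕ} (hK : K.Infinite) :
    ∃ A ∈ S, {k ∈ K | Disjoint A (I k)}.Infinite := by
  by_contra! h
  refine hS ?_
  let D : ℕ → Set (ℕ → Bool) := fun N => ⋂ k ∈ {k ∈ K | N ≤ k}, ⋃ j ∈ I k, {x | x j = true}
  have hDc : ∀ N, IsClosed (D N) := fun N => isClosed_biInter fun k _ =>
    (hfin k).isClosed_biUnion fun j _ => isClosed_eq (continuous_apply j) continuous_const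
  have hDn : ∀ N, IsNowhereDense (D N) := fun N => by
    rw [(hDc N).isNowhereDense_iff, eq_empty_iff_forall_notMem]
    intro x hx
    obtain ⟨n, hn⟩ := isOpen_interior.exists_cylinder_subset hx
    obtain ⟨k, hNk, hkK, hkn⟩ :=
      ((Nat.frequently_atTop_iff_infinite.2 hK).and_eventually (hI n)).forall_exists_of_atTop N
    let y : ℕ → Bool := fun j => if j < n then x j else false
    have hy : y ∈ D N := interior_subset (hn (mem_cylinder_iff.2 fun i hi => if_pos hi))
    obtain ⟨j, hj, hyj⟩ := mem_iUnion₂.1 (mem_iInter₂.1 hy k ⟨hkK, hNk⟩)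
    exact absurd hyj (by simp [y, not_lt.2 (mem_Ici.1 (hkn hj))])
  refine (isMeagre_iUnion fun N => (hDn N).isMeagre).mono ?_
  rintro _ ⟨A, hA, rfl⟩
  obtain ⟨N, hN⟩ := (h A hA).bddAbove
  refine mem_iUnion.2 ⟨N + 1, mem_iInter₂.2 fun k hk => ?_⟩
  obtain ⟨j, hjA, hjk⟩ := not_disjoint_iff.1 fun hdisj => (hN ⟨hk.1, hdisj⟩).not_gt hk.2
  exact mem_iUnion₂.2 ⟨j, hjk, chi_apply_eq_true.2 hjA⟩

lemma exists_antitone_infinite {α : Type*} [Infinite α] {P : ℕ → Set α → Prop}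
    (h : ∀ ℓ K, K.Infinite → ∃ K' ⊆ K, K'.Infinite ∧ P ℓ K') :
    ∃ K : ℕ → Set α, Antitone K ∧ ∀ ℓ, (K ℓ).Infinite ∧ P ℓ (K ℓ) := by
  choose f hfsub hfinf hfP using h
  let K : ℕ → {K : Set α // K.Infinite} := fun ℓ =>
    Nat.rec ⟨f 0 univ infinite_univ, hfinf _ _ _⟩ (fun ℓ K => ⟨f (ℓ + 1) K K.2, hfinf _ _ _⟩) ℓ
  refine ⟨fun ℓ => (K ℓ).1, antitone_nat_of_succ_le fun ℓ => hfsub _ _ _,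
    fun ℓ => ⟨(K ℓ).2, ?_⟩⟩
  cases ℓ <;> exact hfP _ _ _

theorem inter_nonmeager_filters (F : ℕ → Set (Set ℕ)) (hF : ∀ ℓ, IsFilterOn (F ℓ))
    (hnm : ∀ ℓ, ¬ IsMeagre (chi '' F ℓ)) :
    IsFilterOn (⋂ ℓ, F ℓ) ∧ ¬ IsMeagre (chi '' ⋂ ℓ, F ℓ) := by
  have hG : IsFilterOn (⋂ ℓ, F ℓ) := IsFilterOn.iInter hF
  refine ⟨hG, fun hm => ?_⟩
  obtain ⟨a, ha, hfin⟩ := exists_strictMono_finite_disjoint_Ico_of_isMeagre hG.2.2.1 hm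
  set I : ℕ → Set ℕ := fun k => Ico (a k) (a (k + 1))
  have hI : ∀ n, ∀ᶠ k in atTop, I k ⊆ Ici n := fun n =>
    eventually_atTop.2 ⟨n, fun k hk j hj => hk.trans (ha.le_apply.trans hj.1)⟩
  obtain ⟨K, hKanti, hK⟩ := exists_antitone_infinite
    (P := fun ℓ K => ∃ A ∈ F ℓ, ∀ k ∈ K, Disjoint A (I k)) fun ℓ K hK => by
      obtain ⟨A, hA, hAK⟩ :=
        exists_mem_infinite_disjoint_of_not_isMeagre (hnm ℓ) (fun k => finite_Ico _ _) hI hK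
      exact ⟨_, sep_subset _ _, hAK, A, hA, fun k hk => hk.2⟩
  choose hKinf A hA hAK using hK
  obtain ⟨n, hn, hnK⟩ := extraction_forall_of_frequently fun ℓ =>
    Nat.frequently_atTop_iff_infinite.2 (hKinf ℓ)
  let B := (⋃ i, I (n i))ᶜ
  have hB : ∀ ℓ, B ∈ F ℓ := fun ℓ => (hF ℓ).mem_of_diff_subset (hA ℓ) (finite_Iio (a (n ℓ))) (by
    rintro j ⟨hjA, hj⟩ ⟨_, ⟨i, rfl⟩, hji⟩
    rcases lt_or_ge i ℓ with hi | hi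
    · exact hj (hji.2.trans_le (ha.monotone (hn hi)))
    · exact disjoint_left.1 (hAK ℓ _ (hKanti hi (hnK i))) hjA hji)
  refine infinite_range_of_injective hn.injective ((hfin B (mem_iInter.2 hB)).subset ?_)
  rintro _ ⟨i, rfl⟩
  exact disjoint_left.2 fun j hjB hji => hjB (mem_iUnion.2 ⟨i, hji⟩)
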